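/- Let 0 < p < 1 and let q satisfy 1/p + 1/q = 1 (so q < 0), let σ ∈ ℝ, and let h and f be nonnegative Lebesgue-measurable functions on (0,∞) such that k(σ) := ∫₀^∞ h(t) t^{σ-1} dt satisfies 0 < k(σ) < ∞. Then ∫₀^∞ y^{pσ-1} (∫₀^∞ h(x·y) f(x) dx)^p dy ≥ k(σ)^p · ∫₀^∞ x^{p(1-σ)-1} f(x)^p dx. -/

import Mathlib

/-!
For fixed `y > 0`, Hölder's inequality with exponents `1/p` and `1/(1-p)`, applied to
`h(xy) f(x)` and to the weight `h(xy) y^σ x^(σ-1)`, whose `x`-integral is `k(σ)` after the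
substitution `t = xy`, bounds `k(σ)^(p-1) ∫ h(xy) f(x)^p (y^σ x^(σ-1))^(1-p) dx` by
`(∫ h(xy) f(x) dx)^p`. Multiplying by `y^(pσ-1)`, integrating in `y`, exchanging the integrals
and substituting `t = xy` once more in the inner `y`-integral turns the left side into
`k(σ)^p ∫ x^(p(1-σ)-1) f(x)^p dx`.
-/

open MeasureTheory Set
open scoped ENNReal

theorem lintegral_Ioi_comp_mul_left (g : ℝ → ℝ≥0∞) {a : ℝ} (ha : 0 < a) :
    ∫⁻ t in Ioi 0, g (a * t) = ENNReal.ofReal a⁻¹ * ∫⁻ t in Ioi 0, g t := by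
  have hemb : MeasurableEmbedding (a * ·) := (Homeomorph.mulLeft₀ a ha.ne').measurableEmbedding
  have hpre : (a * ·) ⁻¹' Ioi 0 = Ioi (0 : ℝ) := by simp [preimage_const_mul_Ioi₀ _ ha]
  have hmap : (volume.restrict (Ioi 0)).map (a * ·) =
      ENNReal.ofReal a⁻¹ • volume.restrict (Ioi 0) := by
    rw [← hpre, ← hemb.restrict_map, Real.map_volume_mul_left ha.ne', Measure.restrict_smul,
      hpre, abs_of_pos (inv_pos.mpr ha)]
  rw [← hemb.lintegral_map, hmap, lintegral_smul_measure, smul_eq_mul]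

/-- The paper's `k(σ)`, for a kernel with values in `ℝ≥0∞`. -/
noncomputable def lintegralMellin (H : ℝ → ℝ≥0∞) (σ : ℝ) : ℝ≥0∞ :=
  ∫⁻ t in Ioi 0, H t * ENNReal.ofReal (t ^ (σ - 1))

theorem lintegralMellin_comp_mul_left (H : ℝ → ℝ≥0∞) (σ : ℝ) {a : ℝ} (ha : 0 < a) :
    lintegralMellin (fun t ↦ H (a * t)) σ =
      ENNReal.ofReal (a ^ (-σ)) * lintegralMellin H σ := by
  have hweight : EqOn (fun t ↦ H (a * t) * ENNReal.ofReal (t ^ (σ - 1)))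
      (fun t ↦ ENNReal.ofReal (a ^ (1 - σ)) * (H (a * t) * ENNReal.ofReal ((a * t) ^ (σ - 1))))
      (Ioi 0) := by
    intro t (ht : 0 < t)
    dsimp only
    rw [mul_left_comm, ← ENNReal.ofReal_mul (by positivity), Real.mul_rpow ha.le ht.le,
      ← mul_assoc, ← Real.rpow_add ha]
    norm_num
  rw [lintegralMellin, setLIntegral_congr_fun measurableSet_Ioi hweight,
    lintegral_const_mul' _ _ ENNReal.ofReal_ne_top,
    lintegral_Ioi_comp_mul_left (fun t ↦ H t * ENNReal.ofReal (t ^ (σ - 1))) ha, ← mul_assoc,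
    ← ENNReal.ofReal_mul (by positivity), ← Real.rpow_neg_one, ← Real.rpow_add ha,
    lintegralMellin]
  ring_nf

theorem lintegral_mul_rpow_mul_rpow_le {α : Type*} [MeasurableSpace α] (μ : Measure α)
    {p : ℝ} (hp0 : 0 ≤ p) (hp1 : p ≤ 1) {H F w : α → ℝ≥0∞} (hH : AEMeasurable H μ)
    (hF : AEMeasurable F μ) (hw : AEMeasurable w μ) :
    ∫⁻ a, H a * F a ^ p * w a ^ (1 - p) ∂μ ≤
      (∫⁻ a, H a * F a ∂μ) ^ p * (∫⁻ a, H a * w a ∂μ) ^ (1 - p) := by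
  have hsplit (a : α) :
      H a * F a ^ p * w a ^ (1 - p) = (H a * F a) ^ p * (H a * w a) ^ (1 - p) := by
    have hH : H a = H a ^ p * H a ^ (1 - p) := by
      rw [← ENNReal.rpow_add_of_nonneg _ _ hp0 (by linarith), add_sub_cancel, ENNReal.rpow_one]
    rw [ENNReal.mul_rpow_of_nonneg _ _ hp0, ENNReal.mul_rpow_of_nonneg _ _ (by linarith)]
    nth_rewrite 1 [hH]
    ring
  simp_rw [hsplit]
  exact ENNReal.lintegral_mul_norm_pow_le (hH.mul hF) (hH.mul hw) hp0 (by linarith) (by ring)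

section

variable {p σ : ℝ} {H F : ℝ → ℝ≥0∞}

theorem rpow_sub_one_mul_lintegral_le_rpow_lintegral_comp_mul (hp0 : 0 ≤ p) (hp1 : p ≤ 1)
    (hH : Measurable H) (hF : Measurable F) (hK0 : lintegralMellin H σ ≠ 0)
    (hK : lintegralMellin H σ ≠ ⊤) {y : ℝ} (hy : 0 < y) :
    lintegralMellin H σ ^ (p - 1) *
        ∫⁻ x in Ioi 0, H (x * y) * F x ^ p * ENNReal.ofReal (y ^ σ * x ^ (σ - 1)) ^ (1 - p)
      ≤ (∫⁻ x in Ioi 0, H (x * y) * F x) ^ p := by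
  have hweight : ∫⁻ x in Ioi 0, H (x * y) * ENNReal.ofReal (y ^ σ * x ^ (σ - 1)) =
      lintegralMellin H σ := by
    calc ∫⁻ x in Ioi 0, H (x * y) * ENNReal.ofReal (y ^ σ * x ^ (σ - 1))
        = ENNReal.ofReal (y ^ σ) * lintegralMellin (fun t ↦ H (y * t)) σ := by
          rw [lintegralMellin, ← lintegral_const_mul' _ _ ENNReal.ofReal_ne_top]
          congr 1
          funext x
          rw [ENNReal.ofReal_mul (by positivity), mul_comm x y]
          ring
      _ = lintegralMellin H σ := by
          rw [lintegralMellin_comp_mul_left H σ hy, ← mul_assoc,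
            ← ENNReal.ofReal_mul (by positivity), ← Real.rpow_add hy, add_neg_cancel,
            Real.rpow_zero, ENNReal.ofReal_one, one_mul]
  have hHolder := lintegral_mul_rpow_mul_rpow_le (volume.restrict (Ioi 0)) hp0 hp1
    (H := fun x ↦ H (x * y)) (w := fun x ↦ ENNReal.ofReal (y ^ σ * x ^ (σ - 1)))
    (by fun_prop) hF.aemeasurable (by fun_prop)
  rw [hweight] at hHolder
  calc lintegralMellin H σ ^ (p - 1) *
        ∫⁻ x in Ioi 0, H (x * y) * F x ^ p * ENNReal.ofReal (y ^ σ * x ^ (σ - 1)) ^ (1 - p)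
      ≤ lintegralMellin H σ ^ (p - 1) *
          ((∫⁻ x in Ioi 0, H (x * y) * F x) ^ p * lintegralMellin H σ ^ (1 - p)) := by
        gcongr
    _ = (∫⁻ x in Ioi 0, H (x * y) * F x) ^ p := by
        rw [mul_left_comm, ← ENNReal.rpow_add _ _ hK0 hK]
        simp

theorem lintegral_Ioi_rpow_mul_comp_mul_eq (hH : Measurable H) {x : ℝ} (hx : 0 < x)
    (hp1 : p ≤ 1) :
    ∫⁻ y in Ioi 0, ENNReal.ofReal (y ^ (p * σ - 1)) *
        (H (x * y) * F x ^ p * ENNReal.ofReal (y ^ σ * x ^ (σ - 1)) ^ (1 - p))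
      = ENNReal.ofReal (x ^ (p * (1 - σ) - 1)) * F x ^ p * lintegralMellin H σ := by
  have hfactor : EqOn
      (fun y ↦ ENNReal.ofReal (y ^ (p * σ - 1)) *
        (H (x * y) * F x ^ p * ENNReal.ofReal (y ^ σ * x ^ (σ - 1)) ^ (1 - p)))
      (fun y ↦ ENNReal.ofReal (x ^ ((σ - 1) * (1 - p))) * F x ^ p *
        (H (x * y) * ENNReal.ofReal (y ^ (σ - 1)))) (Ioi 0) := by
    intro y (hy : 0 < y)
    have hreal : y ^ (p * σ - 1) * (y ^ σ * x ^ (σ - 1)) ^ (1 - p) =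
        x ^ ((σ - 1) * (1 - p)) * y ^ (σ - 1) := by
      rw [Real.mul_rpow (by positivity) (by positivity), ← Real.rpow_mul hy.le,
        ← Real.rpow_mul hx.le, ← mul_assoc, ← Real.rpow_add hy]
      ring_nf
    dsimp only
    rw [ENNReal.ofReal_rpow_of_nonneg (by positivity) (by linarith)]
    calc ENNReal.ofReal (y ^ (p * σ - 1)) *
          (H (x * y) * F x ^ p * ENNReal.ofReal ((y ^ σ * x ^ (σ - 1)) ^ (1 - p)))
        = ENNReal.ofReal (y ^ (p * σ - 1) * (y ^ σ * x ^ (σ - 1)) ^ (1 - p)) *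
            F x ^ p * H (x * y) := by
          rw [ENNReal.ofReal_mul (by positivity)]
          ring
      _ = _ := by
          rw [hreal, ENNReal.ofReal_mul (by positivity)]
          ring
  calc ∫⁻ y in Ioi 0, ENNReal.ofReal (y ^ (p * σ - 1)) *
        (H (x * y) * F x ^ p * ENNReal.ofReal (y ^ σ * x ^ (σ - 1)) ^ (1 - p))
      = ENNReal.ofReal (x ^ ((σ - 1) * (1 - p))) * F x ^ p *
          lintegralMellin (fun t ↦ H (x * t)) σ := by
        rw [setLIntegral_congr_fun measurableSet_Ioi hfactor,
          lintegral_const_mul _ (by fun_prop), lintegralMellin]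
    _ = _ := by
        rw [lintegralMellin_comp_mul_left H σ hx, mul_right_comm, mul_assoc _ (F x ^ p),
          mul_comm (F x ^ p), ← mul_assoc, ← ENNReal.ofReal_mul (by positivity),
          ← Real.rpow_add hx]
        ring_nf

theorem lintegralMellin_rpow_mul_le_lintegral_rpow_lintegral_comp_mul (hp0 : 0 < p)
    (hp1 : p ≤ 1) (hH : Measurable H) (hF : Measurable F) (hK : lintegralMellin H σ ≠ ⊤) :
    lintegralMellin H σ ^ p * ∫⁻ x in Ioi 0, ENNReal.ofReal (x ^ (p * (1 - σ) - 1)) * F x ^ p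
      ≤ ∫⁻ y in Ioi 0,
          ENNReal.ofReal (y ^ (p * σ - 1)) * (∫⁻ x in Ioi 0, H (x * y) * F x) ^ p := by
  set K := lintegralMellin H σ
  rcases eq_or_ne K 0 with hK0 | hK0
  · simp [hK0, hp0]
  set G : ℝ → ℝ → ℝ≥0∞ := fun y x ↦ ENNReal.ofReal (y ^ (p * σ - 1)) *
    (H (x * y) * F x ^ p * ENNReal.ofReal (y ^ σ * x ^ (σ - 1)) ^ (1 - p))
  have hG : Measurable (Function.uncurry G) := by fun_prop
  calc K ^ p * ∫⁻ x in Ioi 0, ENNReal.ofReal (x ^ (p * (1 - σ) - 1)) * F x ^ p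
      = K ^ (p - 1) * ∫⁻ x in Ioi 0, ENNReal.ofReal (x ^ (p * (1 - σ) - 1)) * F x ^ p * K := by
        have hKp : K ^ p = K ^ (p - 1) * K := by simpa using ENNReal.rpow_add (p - 1) 1 hK0 hK
        rw [lintegral_mul_const' _ _ hK, hKp, mul_assoc, mul_comm K]
    _ = K ^ (p - 1) * ∫⁻ x in Ioi 0, ∫⁻ y in Ioi 0, G y x := by
        congr 1
        exact setLIntegral_congr_fun measurableSet_Ioi fun x hx ↦
          (lintegral_Ioi_rpow_mul_comp_mul_eq hH hx hp1).symm
    _ = ∫⁻ y in Ioi 0, K ^ (p - 1) * ∫⁻ x in Ioi 0, G y x := by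
        rw [← lintegral_lintegral_swap hG.aemeasurable,
          lintegral_const_mul' _ _ (by simp [hK0, hK])]
    _ ≤ _ := by
        refine setLIntegral_mono (by fun_prop) fun y (hy : 0 < y) ↦ ?_
        rw [lintegral_const_mul' _ _ ENNReal.ofReal_ne_top, mul_left_comm]
        gcongr
        exact rpow_sub_one_mul_lintegral_le_rpow_lintegral_comp_mul hp0.le hp1 hH hF hK0 hK hy

end

theorem stmt1_general (p σ : ℝ) (hp0 : 0 < p) (hp1 : p < 1)
    (h f : ℝ → ℝ) (hh : Measurable h) (hf : Measurable f)
    (hf0 : ∀ t ∈ Ioi (0 : ℝ), 0 ≤ f t)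
    (hk1 : (∫⁻ t in Ioi (0 : ℝ), ENNReal.ofReal (h t * t ^ (σ - 1))) < ⊤) :
    (∫⁻ t in Ioi (0 : ℝ), ENNReal.ofReal (h t * t ^ (σ - 1))) ^ p *
        (∫⁻ x in Ioi (0 : ℝ), ENNReal.ofReal (x ^ (p * (1 - σ) - 1) * f x ^ p))
      ≤ ∫⁻ y in Ioi (0 : ℝ),
          ENNReal.ofReal (y ^ (p * σ - 1)) *
            (∫⁻ x in Ioi (0 : ℝ), ENNReal.ofReal (h (x * y) * f x)) ^ p := by
  have hk : ∫⁻ t in Ioi 0, ENNReal.ofReal (h t * t ^ (σ - 1)) =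
      lintegralMellin (fun t ↦ ENNReal.ofReal (h t)) σ :=
    setLIntegral_congr_fun measurableSet_Ioi fun t ht ↦
      ENNReal.ofReal_mul' (Real.rpow_nonneg (le_of_lt ht) _)
  have hweighted : ∫⁻ x in Ioi 0, ENNReal.ofReal (x ^ (p * (1 - σ) - 1) * f x ^ p) =
      ∫⁻ x in Ioi 0, ENNReal.ofReal (x ^ (p * (1 - σ) - 1)) * ENNReal.ofReal (f x) ^ p :=
    setLIntegral_congr_fun measurableSet_Ioi fun x hx ↦ by
      rw [ENNReal.ofReal_mul (Real.rpow_nonneg (le_of_lt hx) _),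
        ENNReal.ofReal_rpow_of_nonneg (hf0 x hx) hp0.le]
  have hkernel (y : ℝ) : ∫⁻ x in Ioi 0, ENNReal.ofReal (h (x * y) * f x) =
      ∫⁻ x in Ioi 0, ENNReal.ofReal (h (x * y)) * ENNReal.ofReal (f x) :=
    setLIntegral_congr_fun measurableSet_Ioi fun x hx ↦ ENNReal.ofReal_mul' (hf0 x hx)
  simp_rw [hk, hweighted, hkernel]
  exact lintegralMellin_rpow_mul_le_lintegral_rpow_lintegral_comp_mul hp0 hp1.le
    hh.ennreal_ofReal hf.ennreal_ofReal (hk ▸ hk1.ne)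

/-- Reverse Yang–Hilbert lemma (case `0 < p < 1`, so `q < 0`): for nonnegative measurable
`h`, `f` on `(0,∞)` with `0 < k(σ) = ∫₀^∞ h(t) t^{σ-1} dt < ∞`, one has
`∫₀^∞ y^{pσ-1} (∫₀^∞ h(xy) f(x) dx)^p dy ≥ k(σ)^p ∫₀^∞ x^{p(1-σ)-1} f(x)^p dx`. -/
theorem stmt1 (p q σ : ℝ) (hp0 : 0 < p) (hp1 : p < 1) (hpq : 1 / p + 1 / q = 1)
    (h f : ℝ → ℝ) (hh : Measurable h) (hf : Measurable f)
    (hh0 : ∀ t ∈ Ioi (0 : ℝ), 0 ≤ h t) (hf0 : ∀ t ∈ Ioi (0 : ℝ), 0 ≤ f t)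
    (hk0 : 0 < ∫⁻ t in Ioi (0 : ℝ), ENNReal.ofReal (h t * t ^ (σ - 1)))
    (hk1 : (∫⁻ t in Ioi (0 : ℝ), ENNReal.ofReal (h t * t ^ (σ - 1))) < ⊤) :
    (∫⁻ t in Ioi (0 : ℝ), ENNReal.ofReal (h t * t ^ (σ - 1))) ^ p *
        (∫⁻ x in Ioi (0 : ℝ), ENNReal.ofReal (x ^ (p * (1 - σ) - 1) * f x ^ p))
      ≤ ∫⁻ y in Ioi (0 : ℝ),
          ENNReal.ofReal (y ^ (p * σ - 1)) *
            (∫⁻ x in Ioi (0 : ℝ), ENNReal.ofReal (h (x * y) * f x)) ^ p :=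
  stmt1_general p σ hp0 hp1 h f hh hf hf0 hk1
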